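/- Let δ ≥ 0 and let Z_a ≅ [0,R]×S¹ be the finite glued cylinder. There exists a constant C > 0, independent of the gluing parameter a (with 0 < |a| < 1/2), such that |e^{−δ|s−R/2|}·q|_{L^∞(Z_a)} ≤ C·⦀q⦀_{2,−δ} for all q ∈ H²(Z_a, ℝ), where ⦀q⦀²_{2,−δ} = Σ_{|α|≤2} ∫_{[0,R]×S¹} |D^α q|² e^{−2δ|s−R/2|} ds dt. -/

import Mathlib

open Filter MeasureTheory

noncomputable section

/-- square of the weighted Sobolev norm `⦀q⦀²_{k,−δ}` on the finite glued cylinder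
`Z_a ≅ [0,R] × S¹` (functions on `ℝ²`, 1-periodic in the second variable), with weight
`e^{−2δ|s − R/2|}` -/
def zNormSq (k : ℕ) (δ R : ℝ) (q : ℝ × ℝ → ℝ) : ℝ :=
  ∑ j ∈ Finset.range (k + 1),
    ∫ x in Set.Ioo (0 : ℝ) R ×ˢ Set.Ioo (0 : ℝ) 1,
      ‖iteratedFDeriv ℝ j q x‖ ^ 2 * Real.exp (-2 * δ * |x.1 - R / 2|)

/-- membership in `H^k(Z_a)` (smooth representatives with finite weighted integrals) -/
def memZ (k : ℕ) (δ R : ℝ) (q : ℝ × ℝ → ℝ) : Prop :=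
  ContDiff ℝ (k : ℕ∞) q ∧ (∀ s t : ℝ, q (s, t + 1) = q (s, t)) ∧
    ∀ j ≤ k, IntegrableOn
      (fun x => ‖iteratedFDeriv ℝ j q x‖ ^ 2 * Real.exp (-2 * δ * |x.1 - R / 2|))
      (Set.Ioo (0 : ℝ) R ×ˢ Set.Ioo (0 : ℝ) 1)

/-! Since `R = e^{1/|a|} - e ≥ 1/2`, every `s ∈ [0, R]` lies in a strip `[r, r + 1/2] × S¹` of
`Z_a`. On a rectangle, the one-dimensional estimate `f(x)² ≤ (1 + 1/L) ∫ (f² + f'²)` (the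
fundamental theorem of calculus applied to `f²`, then averaged over the interval), used first
in `s` and then in `t` for both `q` and `∂ₛq`, bounds `q(s, t)²` by the unweighted `H²`-norm of
`q` on the strip, with a constant independent of `r`. Across the strip the weight
`e^{-2δ|σ - R/2|}` changes by at most a factor `e^δ`, giving `C = √(12 e^δ)`. -/

open Set

section OneDimensional

variable {f f' : ℝ → ℝ} {a b x : ℝ}

theorem sq_le_sq_add_integral_sq_add_sq (hf : ∀ y, HasDerivAt f (f' y) y) (hf' : Continuous f')
    {y : ℝ} (hx : x ∈ Icc a b) (hy : y ∈ Icc a b) :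
    f x ^ 2 ≤ f y ^ 2 + ∫ σ in Ioo a b, (f σ ^ 2 + f' σ ^ 2) := by
  have hfc : Continuous f := continuous_iff_continuousAt.2 fun z => (hf z).continuousAt
  have hG : Continuous fun σ => 2 * f σ * f' σ := (continuous_const.mul hfc).mul hf'
  have hFTC : ∫ σ in y..x, 2 * f σ * f' σ = f x ^ 2 - f y ^ 2 :=
    intervalIntegral.integral_eq_sub_of_hasDerivAt
      (fun σ _ => by simpa using (hf σ).pow 2) (hG.intervalIntegrable y x)
  have hsub : uIoc y x ⊆ Ioc a b := fun z hz =>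
    ⟨(le_min hy.1 hx.1).trans_lt hz.1, hz.2.trans (max_le hy.2 hx.2)⟩
  have hAMGM : ∀ σ, ‖2 * f σ * f' σ‖ ≤ f σ ^ 2 + f' σ ^ 2 := fun σ => by
    rw [Real.norm_eq_abs, abs_mul, abs_mul, abs_two]
    nlinarith [sq_nonneg (|f σ| - |f' σ|), sq_abs (f σ), sq_abs (f' σ)]
  have hint : Continuous fun σ => f σ ^ 2 + f' σ ^ 2 := (hfc.pow 2).add (hf'.pow 2)
  calc f x ^ 2 = f y ^ 2 + ∫ σ in y..x, 2 * f σ * f' σ := by rw [hFTC]; ring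
    _ ≤ f y ^ 2 + ∫ σ in uIoc y x, ‖2 * f σ * f' σ‖ := by
      gcongr
      exact (Real.le_norm_self _).trans intervalIntegral.norm_integral_le_integral_norm_uIoc
    _ ≤ f y ^ 2 + ∫ σ in uIoc y x, (f σ ^ 2 + f' σ ^ 2) := add_le_add le_rfl
      (setIntegral_mono hG.norm.integrableOn_uIoc hint.integrableOn_uIoc hAMGM)
    _ ≤ f y ^ 2 + ∫ σ in Ioc a b, (f σ ^ 2 + f' σ ^ 2) := add_le_add le_rfl
      (setIntegral_mono_set hint.integrableOn_Ioc (ae_of_all _ fun σ => by positivity)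
        (ae_of_all _ hsub))
    _ = _ := by rw [integral_Ioc_eq_integral_Ioo]

theorem sq_le_mul_integral_sq_add_sq (hf : ∀ y, HasDerivAt f (f' y) y) (hf' : Continuous f')
    (hab : a < b) (hx : x ∈ Icc a b) :
    f x ^ 2 ≤ (1 + (b - a)⁻¹) * ∫ σ in Ioo a b, (f σ ^ 2 + f' σ ^ 2) := by
  have hfc : Continuous f := continuous_iff_continuousAt.2 fun z => (hf z).continuousAt
  set K := ∫ σ in Ioo a b, (f σ ^ 2 + f' σ ^ 2)
  have hint : IntegrableOn (fun σ => f σ ^ 2 + f' σ ^ 2) (Ioo a b) :=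
    ((hfc.pow 2).add (hf'.pow 2)).integrableOn_Icc.mono_set Ioo_subset_Icc_self
  have hpt : ∀ y ∈ Ioo a b, f x ^ 2 ≤ f y ^ 2 + f' y ^ 2 + K := fun y hy => by
    have := sq_le_sq_add_integral_sq_add_sq hf hf' hx (Ioo_subset_Icc_self hy)
    nlinarith [sq_nonneg (f' y)]
  have hconst : ∀ c : ℝ, IntegrableOn (fun _ => c) (Ioo a b) := fun _ =>
    integrableOn_const (by simp)
  have hmono := setIntegral_mono_on (hconst _) (hint.add (hconst K)) measurableSet_Ioo hpt
  rw [integral_add' hint (hconst K), setIntegral_const, setIntegral_const,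
    Real.volume_real_Ioo_of_le hab.le, smul_eq_mul, smul_eq_mul] at hmono
  have hba : 0 < b - a := sub_pos.2 hab
  calc f x ^ 2 ≤ ((b - a) * K + K) / (b - a) := (le_div_iff₀' hba).2 (by linarith)
    _ = (1 + (b - a)⁻¹) * K := by field_simp

end OneDimensional

section Jet

variable {E F : Type*} [NormedAddCommGroup E] [NormedSpace ℝ E] [NormedAddCommGroup F]
  [NormedSpace ℝ F]

def jetNormSq (k : ℕ) (q : E → F) (z : E) : ℝ :=
  ∑ j ∈ Finset.range (k + 1), ‖iteratedFDeriv ℝ j q z‖ ^ 2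

theorem ContDiff.continuous_jetNormSq {k : ℕ} {q : E → F} (hq : ContDiff ℝ k q) :
    Continuous (jetNormSq k q) :=
  continuous_finsetSum _ fun j hj =>
    ((hq.continuous_iteratedFDeriv (by exact_mod_cast Finset.mem_range_succ_iff.1 hj)).norm).pow 2

theorem jetNormSq_nonneg (k : ℕ) (q : E → F) (z : E) : 0 ≤ jetNormSq k q z :=
  Finset.sum_nonneg fun _ _ => by positivity

theorem sq_add_sq_partials_le_two_mul_jetNormSq (q : E → ℝ) (z : E) {u v : E} (hu : ‖u‖ ≤ 1)
    (hv : ‖v‖ ≤ 1) :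
    q z ^ 2 + fderiv ℝ q z u ^ 2 + fderiv ℝ q z v ^ 2 + fderiv ℝ (fderiv ℝ q) z v u ^ 2
      ≤ 2 * jetNormSq 2 q z := by
  have h1 : ∀ w : E, ‖w‖ ≤ 1 → fderiv ℝ q z w ^ 2 ≤ ‖iteratedFDeriv ℝ 1 q z‖ ^ 2 := fun w hw => by
    rw [← sq_abs, ← Real.norm_eq_abs, norm_iteratedFDeriv_one]
    gcongr
    exact (fderiv ℝ q z).le_of_opNorm_le_of_le le_rfl hw |>.trans_eq (mul_one _)
  have h2 : fderiv ℝ (fderiv ℝ q) z v u ^ 2 ≤ ‖iteratedFDeriv ℝ 2 q z‖ ^ 2 := by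
    rw [← sq_abs, ← Real.norm_eq_abs, ← norm_iteratedFDeriv_fderiv, norm_iteratedFDeriv_one]
    gcongr
    calc ‖fderiv ℝ (fderiv ℝ q) z v u‖ ≤ ‖fderiv ℝ (fderiv ℝ q) z‖ * ‖v‖ * ‖u‖ :=
          (fderiv ℝ (fderiv ℝ q) z).le_opNorm₂ v u
      _ ≤ ‖fderiv ℝ (fderiv ℝ q) z‖ := by
          nlinarith [norm_nonneg (fderiv ℝ (fderiv ℝ q) z), norm_nonneg u, norm_nonneg v,
            mul_le_one₀ hv (norm_nonneg u) hu]
  have h0 : q z ^ 2 = ‖iteratedFDeriv ℝ 0 q z‖ ^ 2 := by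
    rw [norm_iteratedFDeriv_zero, Real.norm_eq_abs, sq_abs]
  simp only [jetNormSq, Finset.sum_range_succ, Finset.sum_range_zero]
  linarith [h1 u hu, h1 v hv, sq_nonneg ‖iteratedFDeriv ℝ 0 q z‖,
    sq_nonneg ‖iteratedFDeriv ℝ 2 q z‖]

end Jet

section Rectangle

variable {F : Type*} [NormedAddCommGroup F] [NormedSpace ℝ F]

theorem DifferentiableAt.hasDerivAt_slice_fst {g : ℝ × ℝ → F} {σ τ : ℝ}
    (hg : DifferentiableAt ℝ g (σ, τ)) :
    HasDerivAt (fun x => g (x, τ)) (fderiv ℝ g (σ, τ) (1, 0)) σ :=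
  hg.hasFDerivAt.comp_hasDerivAt σ ((hasDerivAt_id σ).prodMk (hasDerivAt_const σ τ))

theorem DifferentiableAt.hasDerivAt_slice_snd {g : ℝ × ℝ → F} {σ τ : ℝ}
    (hg : DifferentiableAt ℝ g (σ, τ)) :
    HasDerivAt (fun y => g (σ, y)) (fderiv ℝ g (σ, τ) (0, 1)) τ :=
  hg.hasFDerivAt.comp_hasDerivAt τ ((hasDerivAt_const τ σ).prodMk (hasDerivAt_id τ))

theorem sq_le_mul_integral_jetNormSq {q : ℝ × ℝ → ℝ} (hq : ContDiff ℝ 2 q) {a b c d : ℝ}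
    (hab : a < b) (hcd : c < d) {p : ℝ × ℝ} (hp : p ∈ Icc a b ×ˢ Icc c d) :
    q p ^ 2 ≤ 2 * (1 + (b - a)⁻¹) * (1 + (d - c)⁻¹) *
      ∫ z in Ioo a b ×ˢ Ioo c d, jetNormSq 2 q z := by
  obtain ⟨s, t⟩ := p
  obtain ⟨hs, ht⟩ := hp
  set I := Ioo a b
  set J := Ioo c d
  have hD : ContDiff ℝ 1 (fderiv ℝ q) := hq.fderiv_right (m := 1) (by norm_num)
  have hqd : Differentiable ℝ q := hq.differentiable (by norm_num)
  have hDd : Differentiable ℝ (fderiv ℝ q) := hD.differentiable (by norm_num)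
  have hDc : Continuous (fderiv ℝ q) := hD.continuous
  have hD2c : Continuous (fderiv ℝ (fderiv ℝ q)) := hD.continuous_fderiv (by norm_num)
  have hjetc : Continuous (jetNormSq 2 q) := hq.continuous_jetNormSq
  have hjet : IntegrableOn (jetNormSq 2 q) (I ×ˢ J) :=
    (hjetc.continuousOn.integrableOn_compact
      (isCompact_Icc.prod isCompact_Icc)).mono_set
      (prod_mono Ioo_subset_Icc_self Ioo_subset_Icc_self)
  have hfubini : ∫ z in I ×ˢ J, jetNormSq 2 q z = ∫ σ in I, ∫ θ in J, jetNormSq 2 q (σ, θ) :=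
    setIntegral_prod _ hjet
  have hmarg : IntegrableOn (fun σ => ∫ θ in J, jetNormSq 2 q (σ, θ)) I := by
    rw [IntegrableOn, Measure.volume_eq_prod, ← Measure.prod_restrict] at hjet
    exact hjet.integral_prod_left
  have hcol : ∀ σ, q (σ, t) ^ 2 + fderiv ℝ q (σ, t) (1, 0) ^ 2
      ≤ 2 * (1 + (d - c)⁻¹) * ∫ θ in J, jetNormSq 2 q (σ, θ) := by
    intro σ
    have hval := sq_le_mul_integral_sq_add_sq (fun θ => (hqd (σ, θ)).hasDerivAt_slice_snd)
      (by fun_prop) hcd ht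
    have hdx := sq_le_mul_integral_sq_add_sq
      (f := fun θ => fderiv ℝ q (σ, θ) (1, 0))
      (fun θ => (ContinuousLinearMap.apply ℝ ℝ ((1 : ℝ), (0 : ℝ))).hasFDerivAt.comp_hasDerivAt θ
        (hDd (σ, θ)).hasDerivAt_slice_snd) (by fun_prop) hcd ht
    have hJ : ∀ g : ℝ → ℝ, Continuous g → IntegrableOn g J := fun g hg =>
      hg.integrableOn_Icc.mono_set Ioo_subset_Icc_self
    calc q (σ, t) ^ 2 + fderiv ℝ q (σ, t) (1, 0) ^ 2
        ≤ (1 + (d - c)⁻¹) * ∫ θ in J, ((q (σ, θ) ^ 2 + fderiv ℝ q (σ, θ) (0, 1) ^ 2) +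
            (fderiv ℝ q (σ, θ) (1, 0) ^ 2 + fderiv ℝ (fderiv ℝ q) (σ, θ) (0, 1) (1, 0) ^ 2)) := by
          rw [integral_add (hJ _ (by fun_prop)) (hJ _ (by fun_prop)), mul_add]
          exact add_le_add hval hdx
      _ ≤ (1 + (d - c)⁻¹) * ∫ θ in J, 2 * jetNormSq 2 q (σ, θ) := by
          refine mul_le_mul_of_nonneg_left (setIntegral_mono (hJ _ (by fun_prop))
            (hJ _ (by fun_prop)) fun θ => ?_) (by positivity)
          have := sq_add_sq_partials_le_two_mul_jetNormSq q (σ, θ) (u := (1, 0)) (v := (0, 1))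
            (by simp) (by simp)
          linarith
      _ = _ := by rw [integral_const_mul]; ring
  have hrow := sq_le_mul_integral_sq_add_sq (fun σ => (hqd (σ, t)).hasDerivAt_slice_fst)
    (by fun_prop) hab hs
  calc q (s, t) ^ 2 ≤ (1 + (b - a)⁻¹) * ∫ σ in I, (q (σ, t) ^ 2 + fderiv ℝ q (σ, t) (1, 0) ^ 2) :=
        hrow
    _ ≤ (1 + (b - a)⁻¹) * ∫ σ in I, 2 * (1 + (d - c)⁻¹) * ∫ θ in J, jetNormSq 2 q (σ, θ) := by
        refine mul_le_mul_of_nonneg_left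
          (setIntegral_mono ?_ (hmarg.const_mul _) hcol) (by positivity)
        exact (Continuous.integrableOn_Icc (by fun_prop)).mono_set Ioo_subset_Icc_self
    _ = _ := by rw [integral_const_mul, hfubini]; ring

end Rectangle

theorem Function.Periodic.map_fract {α β : Type*} [Ring α] [LinearOrder α] [FloorRing α]
    {f : α → β} (hf : Function.Periodic f 1) (x : α) : f (Int.fract x) = f x := by
  have := hf.sub_int_mul_eq (x := x) ⌊x⌋
  rwa [mul_one, Int.self_sub_floor] at this

theorem exists_Icc_add_mem_of_mem_Icc {s L R : ℝ} (hs : s ∈ Icc 0 R) (hL : 0 ≤ L) (hLR : L ≤ R) :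
    ∃ r, 0 ≤ r ∧ r + L ≤ R ∧ s ∈ Icc r (r + L) := by
  refine ⟨min s (R - L), le_min hs.1 (by linarith), ?_, min_le_left _ _, ?_⟩
  · linarith [min_le_right s (R - L)]
  · rw [← min_add_add_right, sub_add_cancel]
    exact le_min (by linarith) hs.2

theorem half_le_exp_inv_sub_exp_one {r : ℝ} (hr : 0 < r) (hr' : r < 1 / 2) :
    1 / 2 ≤ Real.exp (1 / r) - Real.exp 1 := by
  have h2 : 2 ≤ 1 / r := by rw [le_div_iff₀ hr]; linarith
  have he : 2 ≤ Real.exp 1 := by linarith [Real.add_one_le_exp 1]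
  have : Real.exp 1 * Real.exp 1 ≤ Real.exp (1 / r) := by
    rw [← Real.exp_add]; exact Real.exp_le_exp.2 (by linarith)
  nlinarith

theorem exp_neg_mul_abs_sub_le {c h x y m : ℝ} (hc : 0 ≤ c) (hxy : |x - y| ≤ h) :
    Real.exp (-c * |x - m|) ≤ Real.exp (c * h) * Real.exp (-c * |y - m|) := by
  rw [← Real.exp_add, Real.exp_le_exp]
  have : |y - m| - |x - m| ≤ h := calc
    |y - m| - |x - m| ≤ |y - m - (x - m)| := abs_sub_abs_le_abs_sub _ _
    _ = |x - y| := by rw [sub_sub_sub_cancel_right, abs_sub_comm]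
    _ ≤ h := hxy
  nlinarith [mul_le_mul_of_nonneg_left this hc]

theorem sq_le_mul_integral_jetNormSq_strip {q : ℝ × ℝ → ℝ} (hq : ContDiff ℝ 2 q)
    (hper : ∀ s t, q (s, t + 1) = q (s, t)) {r s : ℝ} (hs : s ∈ Icc r (r + 1 / 2)) (t : ℝ) :
    q (s, t) ^ 2 ≤ 12 * ∫ z in Ioo r (r + 1 / 2) ×ˢ Ioo 0 1, jetNormSq 2 q z := by
  have hper_s : Function.Periodic (fun τ => q (s, τ)) 1 := hper s
  have h := sq_le_mul_integral_jetNormSq hq (by linarith : r < r + 1 / 2) zero_lt_one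
    (p := (s, Int.fract t)) ⟨hs, Int.fract_nonneg t, (Int.fract_lt_one t).le⟩
  rw [hper_s.map_fract] at h
  convert h using 2
  norm_num

section GluedCylinder

variable {k : ℕ} {δ R : ℝ} {q : ℝ × ℝ → ℝ}

theorem memZ.integrableOn_jetNormSq_mul (hq : memZ k δ R q) :
    IntegrableOn (fun x => jetNormSq k q x * Real.exp (-2 * δ * |x.1 - R / 2|))
      (Ioo 0 R ×ˢ Ioo 0 1) := by
  simp only [jetNormSq, Finset.sum_mul]
  exact integrable_finsetSum _ fun j hj => hq.2.2 j (Nat.lt_succ_iff.1 (Finset.mem_range.1 hj))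

theorem zNormSq_eq_setIntegral_jetNormSq_mul (hq : memZ k δ R q) :
    zNormSq k δ R q =
      ∫ x in Ioo 0 R ×ˢ Ioo 0 1, jetNormSq k q x * Real.exp (-2 * δ * |x.1 - R / 2|) := by
  simp only [zNormSq, jetNormSq, Finset.sum_mul]
  exact (integral_finsetSum _ fun j hj =>
    hq.2.2 j (Nat.lt_succ_iff.1 (Finset.mem_range.1 hj))).symm

theorem exp_mul_setIntegral_jetNormSq_le (hq : memZ k δ R q) (hδ : 0 ≤ δ) {S : Set (ℝ × ℝ)}
    (hSm : MeasurableSet S) (hS : S ⊆ Ioo 0 R ×ˢ Ioo 0 1) {s h : ℝ}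
    (hSs : ∀ z ∈ S, |s - z.1| ≤ h) :
    Real.exp (-2 * δ * |s - R / 2|) * ∫ z in S, jetNormSq k q z
      ≤ Real.exp (2 * δ * h) * zNormSq k δ R q := by
  have hint := hq.integrableOn_jetNormSq_mul
  have hweight : ∀ z ∈ S, Real.exp (-2 * δ * |s - R / 2|) * jetNormSq k q z
      ≤ Real.exp (2 * δ * h) * (jetNormSq k q z * Real.exp (-2 * δ * |z.1 - R / 2|)) := by
    intro z hz
    have := exp_neg_mul_abs_sub_le (c := 2 * δ) (m := R / 2) (by positivity) (hSs z hz)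
    simp only [neg_mul] at this ⊢
    nlinarith [jetNormSq_nonneg k q z]
  calc Real.exp (-2 * δ * |s - R / 2|) * ∫ z in S, jetNormSq k q z
      = ∫ z in S, Real.exp (-2 * δ * |s - R / 2|) * jetNormSq k q z :=
        (integral_const_mul _ _).symm
    _ ≤ ∫ z in S, Real.exp (2 * δ * h) * (jetNormSq k q z * Real.exp (-2 * δ * |z.1 - R / 2|)) :=
        integral_mono_of_nonneg (ae_of_all _ fun z => by positivity [jetNormSq_nonneg k q z])
          ((hint.mono_set hS).const_mul _) (ae_restrict_of_forall_mem hSm hweight)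
    _ ≤ Real.exp (2 * δ * h) *
          ∫ z in Ioo 0 R ×ˢ Ioo 0 1, jetNormSq k q z * Real.exp (-2 * δ * |z.1 - R / 2|) := by
        rw [integral_const_mul]
        refine mul_le_mul_of_nonneg_left (setIntegral_mono_set hint ?_ hS.eventuallyLE)
          (Real.exp_pos _).le
        exact ae_of_all _ fun z => mul_nonneg (jetNormSq_nonneg k q z) (Real.exp_pos _).le
    _ = _ := by rw [zNormSq_eq_setIntegral_jetNormSq_mul hq]

end GluedCylinder

theorem weighted_sup_bound_on_glued_cylinder (δ : ℝ) (hδ : 0 ≤ δ) :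
    ∃ C : ℝ, 0 < C ∧
      ∀ a : ℂ, 0 < ‖a‖ → ‖a‖ < 1 / 2 →
      ∀ R : ℝ, R = Real.exp (1 / ‖a‖) - Real.exp 1 →
      ∀ q : ℝ × ℝ → ℝ, memZ 2 δ R q →
      ∀ s t : ℝ, s ∈ Set.Icc (0 : ℝ) R →
        Real.exp (-δ * |s - R / 2|) * |q (s, t)| ≤ C * Real.sqrt (zNormSq 2 δ R q) := by
  refine ⟨Real.sqrt (12 * Real.exp δ), by positivity, ?_⟩
  intro a ha ha' R hR q hq s t hs
  obtain ⟨r, hr0, hrR, hsr⟩ := exists_Icc_add_mem_of_mem_Icc hs (by norm_num : (0 : ℝ) ≤ 1 / 2)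
    (hR ▸ half_le_exp_inv_sub_exp_one ha ha')
  have hsob := sq_le_mul_integral_jetNormSq_strip hq.1 hq.2.1 hsr t
  have hweight := exp_mul_setIntegral_jetNormSq_le hq hδ (measurableSet_Ioo.prod measurableSet_Ioo)
    (prod_mono (Ioo_subset_Ioo hr0 hrR) subset_rfl) (s := s) (h := 1 / 2)
    fun z hz => abs_sub_le_iff.2 ⟨by linarith [hz.1.1, hsr.2], by linarith [hz.1.2, hsr.1]⟩
  have hsq : (Real.exp (-δ * |s - R / 2|) * |q (s, t)|) ^ 2 ≤ 12 * Real.exp δ * zNormSq 2 δ R q :=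
    calc (Real.exp (-δ * |s - R / 2|) * |q (s, t)|) ^ 2
        = Real.exp (-2 * δ * |s - R / 2|) * q (s, t) ^ 2 := by
          rw [mul_pow, sq_abs, ← Real.exp_nat_mul]; ring_nf
      _ ≤ 12 * (Real.exp (-2 * δ * |s - R / 2|) *
            ∫ z in Ioo r (r + 1 / 2) ×ˢ Ioo 0 1, jetNormSq 2 q z) := by
          nlinarith [Real.exp_pos (-2 * δ * |s - R / 2|)]
      _ ≤ 12 * (Real.exp δ * zNormSq 2 δ R q) := by
          rw [show 2 * δ * (1 / 2) = δ by ring] at hweight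
          exact mul_le_mul_of_nonneg_left hweight (by norm_num)
      _ = 12 * Real.exp δ * zNormSq 2 δ R q := by ring
  rw [← Real.sqrt_mul (by positivity)]
  exact Real.le_sqrt_of_sq_le hsq
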